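/- arXiv:2402.06323 — 2 statements merged into one kernel-verified Lean document; each statement's English description precedes it below -/
import Mathlib

section
/- Let p̃ ∈ (0, 1/2) and δ_h ∈ (0,1). Setting τ = ⌈log(δ_h)/log(1-p̃)⌉ and δ_S ∈ (0,1), we have log(τ/δ_S) ≤ log(1/p̃) + log(1/δ_S) + log(log(1/δ_h)) + p̃/log(1/δ_h). -/
theorem log_tau_div_deltaS_bound (p δh δS : ℝ)
    (hp : p ∈ Set.Ioo (0:ℝ) (1/2)) (hδh : δh ∈ Set.Ioo (0:ℝ) 1)
    (hδS : δS ∈ Set.Ioo (0:ℝ) 1)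
    (τ : ℕ) (hτ : τ = ⌈Real.log δh / Real.log (1 - p)⌉₊) :
    Real.log (τ / δS) ≤
      Real.log (1 / p) + Real.log (1 / δS) + Real.log (Real.log (1 / δh)) +
        p / Real.log (1 / δh) := by
  obtain ⟨hp0, hp2⟩ := hp
  obtain ⟨hh0, hh1⟩ := hδh
  obtain ⟨hS0, hS1⟩ := hδS
  have h1p0 : 0 < 1 - p := by linarith
  have hlogh : Real.log δh < 0 := Real.log_neg hh0 hh1
  have hlog1p : Real.log (1 - p) < 0 := Real.log_neg h1p0 (by linarith)
  set L := -Real.log δh with hLdef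
  set q := -Real.log (1 - p) with hqdef
  have hL : 0 < L := by rw [hLdef]; linarith
  have hq : 0 < q := by rw [hqdef]; linarith
  have hpq : p ≤ q := by
    have h2 : Real.log (1 - p) ≤ -p := by
      rw [Real.log_le_iff_le_exp h1p0]
      have := Real.add_one_le_exp (-p)
      linarith
    rw [hqdef]; linarith
  have hratio : Real.log δh / Real.log (1 - p) = L / q := by
    rw [hLdef, hqdef, neg_div_neg_eq]
  have hτpos : 0 < τ := by
    rw [hτ]; exact Nat.ceil_pos.mpr (by rw [hratio]; positivity)
  have hτle : (τ : ℝ) ≤ L / p + 1 := by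
    have h1 : (τ : ℝ) < Real.log δh / Real.log (1 - p) + 1 := by
      rw [hτ]
      exact Nat.ceil_lt_add_one (by rw [hratio]; positivity)
    have h2 : L / q ≤ L / p := div_le_div_of_nonneg_left hL.le hp0 hpq
    rw [hratio] at h1
    linarith
  have hkey : (τ : ℝ) ≤ L / p * Real.exp (p / L) := by
    have h4 := Real.add_one_le_exp (p / L)
    have h3 : L / p * (p / L + 1) = L / p + 1 := by field_simp; ring
    nlinarith [div_pos hL hp0]
  have hlogτ : Real.log τ ≤ Real.log (L / p) + p / L := by
    calc Real.log τ ≤ Real.log (L / p * Real.exp (p / L)) :=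
          Real.log_le_log (by exact_mod_cast hτpos) hkey
      _ = Real.log (L / p) + p / L := by
          rw [Real.log_mul (by positivity) (Real.exp_ne_zero _), Real.log_exp]
  have hLδh : Real.log (1 / δh) = L := by rw [one_div, Real.log_inv]
  rw [Real.log_div (by exact_mod_cast hτpos.ne') hS0.ne',
      one_div, Real.log_inv, one_div, Real.log_inv, hLδh]
  have hsplit : Real.log (L / p) = Real.log L - Real.log p :=
    Real.log_div hL.ne' hp0.ne'
  linarith [hlogτ]
end

section
/- Let x be uniform on S^{d-1} (d ≥ 2) and y a fixed unit vector, and let ε ∈ (0, π/2). Then P(x·y > cos ε) ≥ sin(ε)^{d-1} / ((d-1) B(1/2, (d-1)/2)), where B is the Beta function. -/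
open MeasureTheory

open Real Set

/-- The Beta function `B(a,b) = Γ(a)Γ(b)/Γ(a+b)`. -/
noncomputable def betaFn (a b : ℝ) : ℝ := Real.Gamma a * Real.Gamma b / Real.Gamma (a + b)

lemma vol_sq_sum_lt (n : ℕ) (hn : 0 < n) (R : ℝ) (hR : 0 < R) :
    volume {z : Fin n → ℝ | ∑ i, z i ^ 2 < R ^ 2} =
      ENNReal.ofReal R ^ n * ENNReal.ofReal (Real.sqrt π ^ n / Real.Gamma (n / 2 + 1)) := by
  haveI : Nonempty (Fin n) := Fin.pos_iff_nonempty.mp hn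
  have hmeas : MeasurableSet {z : Fin n → ℝ | ∑ i, z i ^ 2 < R ^ 2} := by
    apply measurableSet_lt (by measurability) measurable_const
  have h := (EuclideanSpace.volume_preserving_symm_measurableEquiv_toLp (Fin n)).measure_preimage
    hmeas.nullMeasurableSet
  have hpre : (MeasurableEquiv.toLp 2 (Fin n → ℝ)).symm ⁻¹' {z : Fin n → ℝ | ∑ i, z i ^ 2 < R ^ 2}
      = Metric.ball (0 : EuclideanSpace ℝ (Fin n)) R := by
    ext w
    simp only [Set.mem_preimage, Set.mem_setOf_eq, Metric.mem_ball, dist_zero_right]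
    rw [EuclideanSpace.norm_eq]
    rw [show (MeasurableEquiv.toLp 2 (Fin n → ℝ)).symm w = (w : Fin n → ℝ) from rfl]
    constructor
    · intro hw
      have : ∑ i, ‖w i‖ ^ 2 < R ^ 2 := by simpa [Real.norm_eq_abs, sq_abs] using hw
      calc Real.sqrt (∑ i, ‖w i‖ ^ 2) < Real.sqrt (R ^ 2) := by
            exact Real.sqrt_lt_sqrt (by positivity) this
        _ = R := Real.sqrt_sq hR.le
    · intro hw
      have := (Real.sqrt_lt' hR).mp hw
      simpa [Real.norm_eq_abs, sq_abs] using this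
  rw [hpre] at h
  rw [← h, EuclideanSpace.volume_ball]
  simp

lemma lint_ofReal (a b : ℝ) (hab : a ≤ b) (g : ℝ → ℝ) (hg : Continuous g)
    (hgpos : ∀ t ∈ Ioo a b, 0 ≤ g t) :
    ∫⁻ t in Ioo a b, ENNReal.ofReal (g t) = ENNReal.ofReal (∫ t in a..b, g t) := by
  rw [intervalIntegral.integral_of_le hab, MeasureTheory.integral_Ioc_eq_integral_Ioo]
  rw [MeasureTheory.ofReal_integral_eq_lintegral_ofReal]
  · exact ((hg.integrableOn_Icc).mono_set Ioo_subset_Icc_self)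
  · filter_upwards [ae_restrict_mem measurableSet_Ioo] with t ht using hgpos t ht

lemma integral_one' (n : ℕ) (c s : ℝ) (hc0 : 0 < c) :
    ∫ t in (0:ℝ)..c, (t * (s/c)) ^ n = s ^ n * c / (n+1) := by
  simp_rw [mul_pow]
  rw [intervalIntegral.integral_mul_const, integral_pow]
  rw [zero_pow (Nat.succ_ne_zero n)]
  rw [div_pow]
  field_simp
  ring

lemma integral_two (n : ℕ) (c : ℝ) (hc0 : 0 < c) (hc1 : c < 1) :
    ∫ t in c..(1:ℝ), (Real.sqrt ((1+c)*(1-t))) ^ n =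
      Real.sqrt (1+c) ^ n * ((1-c) ^ ((n:ℝ)/2 + 1) / ((n:ℝ)/2 + 1)) := by
  have h1c : (0:ℝ) ≤ 1 + c := by linarith
  have key : ∀ t : ℝ, Real.sqrt ((1+c)*(1-t)) ^ n
      = Real.sqrt (1+c) ^ n * Real.sqrt (1-t) ^ n := by
    intro t; rw [Real.sqrt_mul h1c, mul_pow]
  simp_rw [key]
  rw [intervalIntegral.integral_const_mul]
  congr 1
  have comp := intervalIntegral.integral_comp_sub_left (a := c) (b := (1:ℝ))
    (fun u => Real.sqrt u ^ n) 1
  simp only [sub_self] at comp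
  rw [comp]
  have congr1 : EqOn (fun u => Real.sqrt u ^ n) (fun u : ℝ => u ^ ((n:ℝ)/2))
      (Set.uIcc 0 (1-c)) := by
    intro u hu
    rw [Set.uIcc_of_le (by linarith)] at hu
    have hu0 : 0 ≤ u := hu.1
    simp only
    rw [Real.sqrt_eq_rpow, ← Real.rpow_natCast (u ^ ((1:ℝ)/2)) n, ← Real.rpow_mul hu0]
    congr 1
    ring
  rw [intervalIntegral.integral_congr congr1]
  rw [integral_rpow (Or.inl (lt_of_lt_of_le (by norm_num) (by positivity : (0:ℝ) ≤ (n:ℝ)/2)))]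
  rw [Real.zero_rpow (by positivity : (0:ℝ) < (n:ℝ)/2+1).ne']
  norm_num

lemma vol_solid (n : ℕ) (hn : 0 < n) (a b : ℝ) (f : ℝ → ℝ) (hf : Continuous f)
    (hfpos : ∀ t ∈ Ioo a b, 0 < f t) :
    volume {v : EuclideanSpace ℝ (Fin (n+1)) |
        v 0 ∈ Ioo a b ∧ ∑ i : Fin n, v (Fin.succAbove (0 : Fin (n+1)) i) ^ 2 < f (v 0) ^ 2} =
      (∫⁻ t in Ioo a b, ENNReal.ofReal (f t ^ n)) *
        ENNReal.ofReal (Real.sqrt π ^ n / Real.Gamma (n / 2 + 1)) := by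
  set Vn := ENNReal.ofReal (Real.sqrt π ^ n / Real.Gamma (n / 2 + 1)) with hVn
  set B : Set (ℝ × (Fin n → ℝ)) :=
    {p | p.1 ∈ Ioo a b ∧ ∑ i, p.2 i ^ 2 < f p.1 ^ 2} with hB
  have hBmeas : MeasurableSet B := by
    apply MeasurableSet.inter
    · exact (measurable_fst) measurableSet_Ioo
    · exact measurableSet_lt
        (Finset.measurable_sum _ fun i _ => ((measurable_pi_apply i).comp measurable_snd).pow_const 2)
        ((hf.measurable.comp measurable_fst).pow_const 2)
  -- step 1: Euclidean to pi
  have h1 := (EuclideanSpace.volume_preserving_symm_measurableEquiv_toLp (Fin (n+1))).measure_preimage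
    (s := (MeasurableEquiv.piFinSuccAbove (fun _ : Fin (n+1) => ℝ) 0) ⁻¹' B)
    (((MeasurableEquiv.piFinSuccAbove (fun _ : Fin (n+1) => ℝ) 0).measurable
      hBmeas).nullMeasurableSet)
  have h2 := (MeasureTheory.volume_preserving_piFinSuccAbove (fun _ : Fin (n+1) => ℝ) 0
    ).measure_preimage hBmeas.nullMeasurableSet
  have hset : (MeasurableEquiv.toLp 2 (Fin (n+1) → ℝ)).symm ⁻¹'
      ((MeasurableEquiv.piFinSuccAbove (fun _ : Fin (n+1) => ℝ) 0) ⁻¹' B) =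
      {v : EuclideanSpace ℝ (Fin (n+1)) |
        v 0 ∈ Ioo a b ∧ ∑ i : Fin n, v (Fin.succAbove (0 : Fin (n+1)) i) ^ 2 < f (v 0) ^ 2} := by
    ext v
    simp [MeasurableEquiv.piFinSuccAbove_apply, hB, Fin.removeNth]
    intros; rfl
  rw [hset] at h1
  rw [h1, h2]
  -- step 3: prod_apply
  rw [MeasureTheory.Measure.volume_eq_prod, Measure.prod_apply hBmeas]
  have hslice : ∀ t : ℝ, volume (Prod.mk t ⁻¹' B) =
      Set.indicator (Ioo a b) (fun t => ENNReal.ofReal (f t ^ n) * Vn) t := by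
    intro t
    by_cases ht : t ∈ Ioo a b
    · rw [Set.indicator_of_mem ht]
      have : Prod.mk t ⁻¹' B = {z : Fin n → ℝ | ∑ i, z i ^ 2 < f t ^ 2} := by
        ext z; simp only [hB, Set.mem_preimage, Set.mem_setOf_eq]; exact and_iff_right ht
      rw [this, vol_sq_sum_lt n hn (f t) (hfpos t ht), ← hVn,
        ← ENNReal.ofReal_pow (hfpos t ht).le]
    · rw [Set.indicator_of_notMem ht]
      have : Prod.mk t ⁻¹' B = ∅ := by
        ext z; simp only [hB, Set.mem_preimage, Set.mem_setOf_eq, Set.mem_empty_iff_false,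
          iff_false]; tauto
      simp [this]
  simp_rw [hslice]
  rw [lintegral_indicator measurableSet_Ioo]
  rw [lintegral_mul_const _ (by
    exact (ENNReal.measurable_ofReal.comp (hf.measurable.pow_const n)))]

set_option maxHeartbeats 2000000 in
lemma cap_vol_lower (n : ℕ) (hn : 0 < n) (c s : ℝ) (hc0 : 0 < c) (hc1 : c < 1)
    (hs : 0 < s) (hcs : c^2 + s^2 = 1) :
    ENNReal.ofReal (Real.sqrt π ^ n / Real.Gamma (n / 2 + 1) * (s ^ n / (n+1))) ≤
      volume {v : EuclideanSpace ℝ (Fin (n+1)) | ‖v‖ < 1 ∧ c * ‖v‖ < v 0} := by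
  set Vn := ENNReal.ofReal (Real.sqrt π ^ n / Real.Gamma (n / 2 + 1)) with hVn
  have hVnn : (0:ℝ) ≤ Real.sqrt π ^ n / Real.Gamma (n / 2 + 1) := by
    have := Real.Gamma_pos_of_pos (show (0:ℝ) < (n:ℝ)/2 + 1 by positivity)
    positivity
  set f₁ : ℝ → ℝ := fun t => t * (s/c) with hf₁
  set f₂ : ℝ → ℝ := fun t => Real.sqrt ((1+c)*(1-t)) with hf₂
  set S₁ : Set (EuclideanSpace ℝ (Fin (n+1))) := {v |
      v 0 ∈ Ioo 0 c ∧ ∑ i : Fin n, v (Fin.succAbove (0 : Fin (n+1)) i) ^ 2 < f₁ (v 0) ^ 2}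
  set S₂ : Set (EuclideanSpace ℝ (Fin (n+1))) := {v |
      v 0 ∈ Ioo c 1 ∧ ∑ i : Fin n, v (Fin.succAbove (0 : Fin (n+1)) i) ^ 2 < f₂ (v 0) ^ 2}
  -- norm formula
  have hnorm : ∀ v : EuclideanSpace ℝ (Fin (n+1)),
      ‖v‖ ^ 2 = v 0 ^ 2 + ∑ i : Fin n, v (Fin.succAbove (0 : Fin (n+1)) i) ^ 2 := by
    intro v
    rw [EuclideanSpace.norm_eq, Real.sq_sqrt (by positivity)]
    rw [Fin.sum_univ_succAbove (fun i => ‖v i‖ ^ 2) 0]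
    simp [Real.norm_eq_abs, sq_abs]
  have hsum_nonneg : ∀ v : EuclideanSpace ℝ (Fin (n+1)),
      0 ≤ ∑ i : Fin n, v (Fin.succAbove (0 : Fin (n+1)) i) ^ 2 := fun v => by positivity
  -- inclusions
  have hsub1 : S₁ ⊆ {v : EuclideanSpace ℝ (Fin (n+1)) | ‖v‖ < 1 ∧ c * ‖v‖ < v 0} := by
    rintro v ⟨⟨ht0, htc⟩, hr⟩
    have hv2 := hnorm v
    have hrn := hsum_nonneg v
    have hq : c^2 * (f₁ (v 0))^2 = (v 0)^2 * s^2 := by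
      simp only [hf₁]; field_simp
    have h5 : c^2 * (∑ i : Fin n, v (Fin.succAbove (0 : Fin (n+1)) i) ^ 2) < (v 0)^2 * s^2 := by
      rw [← hq]
      exact mul_lt_mul_of_pos_left hr (by positivity)
    have h6 : c^2 * ‖v‖^2 = c^2 * (v 0)^2 + c^2 * (∑ i : Fin n, v (Fin.succAbove (0 : Fin (n+1)) i) ^ 2) := by
      rw [hv2]; ring
    have h7 : (v 0)^2 * (c^2 + s^2) = (v 0)^2 := by rw [hcs]; ring
    have key : c^2 * ‖v‖^2 < (v 0)^2 := by nlinarith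
    have hvlt : c * ‖v‖ < v 0 := by
      have h10 : (c * ‖v‖)^2 < (v 0)^2 := by rw [mul_pow]; linarith [key]
      exact lt_of_pow_lt_pow_left₀ 2 ht0.le h10
    refine ⟨?_, hvlt⟩
    have h9 : ‖v‖^2 < 1 := by
      have h11 : (v 0)^2 < c^2 := by nlinarith
      nlinarith [key, h11, sq_nonneg c, mul_pos hc0 hc0]
    exact lt_of_pow_lt_pow_left₀ 2 zero_le_one (by rw [one_pow]; exact h9)
  have hsub2 : S₂ ⊆ {v : EuclideanSpace ℝ (Fin (n+1)) | ‖v‖ < 1 ∧ c * ‖v‖ < v 0} := by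
    rintro v ⟨⟨htc, ht1⟩, hr⟩
    have hv2 := hnorm v
    have hrn := hsum_nonneg v
    have hro : (f₂ (v 0))^2 = (1+c)*(1 - v 0) := by
      simp only [hf₂]; rw [Real.sq_sqrt (by nlinarith)]
    rw [hro] at hr
    have h5 : c^2 * (∑ i : Fin n, v (Fin.succAbove (0 : Fin (n+1)) i) ^ 2)
        < c^2 * ((1+c)*(1 - v 0)) := mul_lt_mul_of_pos_left hr (by positivity)
    have h6 : c^2 * ((1+c)*(1 - v 0)) ≤ (v 0)^2 * s^2 := by
      nlinarith [mul_nonneg (mul_nonneg (sub_nonneg.mpr hc1.le) (sub_nonneg.mpr htc.le))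
          (by linarith : (0:ℝ) ≤ v 0 + c),
        mul_nonneg (sub_nonneg.mpr htc.le) (sq_nonneg c),
        (by linarith : (0:ℝ) ≤ 1 + c)]
    have h8 : c^2 * ‖v‖^2 = c^2 * (v 0)^2 + c^2 * (∑ i : Fin n, v (Fin.succAbove (0 : Fin (n+1)) i) ^ 2) := by
      rw [hv2]; ring
    have h7 : (v 0)^2 * (c^2 + s^2) = (v 0)^2 := by rw [hcs]; ring
    have key : c^2 * ‖v‖^2 < (v 0)^2 := by nlinarith
    have hvlt : c * ‖v‖ < v 0 := by
      have h10 : (c * ‖v‖)^2 < (v 0)^2 := by rw [mul_pow]; linarith [key]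
      exact lt_of_pow_lt_pow_left₀ 2 (by linarith : (0:ℝ) ≤ v 0) h10
    refine ⟨?_, hvlt⟩
    have h9 : ‖v‖^2 < 1 := by
      nlinarith [mul_nonneg (sub_nonneg.mpr ht1.le) (sub_nonneg.mpr htc.le)]
    exact lt_of_pow_lt_pow_left₀ 2 zero_le_one (by rw [one_pow]; exact h9)
  -- measurability
  have hcont0 : Continuous (fun v : EuclideanSpace ℝ (Fin (n+1)) => v 0) :=
    (EuclideanSpace.proj (0 : Fin (n+1))).continuous
  have hf2c : Continuous f₂ := by
    rw [hf₂]
    exact Real.continuous_sqrt.comp (continuous_const.mul (continuous_const.sub continuous_id))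
  have hcontsum : Continuous (fun v : EuclideanSpace ℝ (Fin (n+1)) =>
      ∑ i : Fin n, v (Fin.succAbove (0 : Fin (n+1)) i) ^ 2) :=
    continuous_finset_sum _ fun i _ => ((EuclideanSpace.proj (Fin.succAbove 0 i)).continuous.pow 2)
  have hmeas2 : MeasurableSet S₂ := by
    have h1 : S₂ = ((fun v : EuclideanSpace ℝ (Fin (n+1)) => v 0) ⁻¹' Ioo c 1) ∩
        {v : EuclideanSpace ℝ (Fin (n+1)) |
          ∑ i : Fin n, v (Fin.succAbove (0 : Fin (n+1)) i) ^ 2 < f₂ (v 0) ^ 2} := rfl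
    rw [h1]
    exact (hcont0.measurable measurableSet_Ioo).inter
      (measurableSet_lt hcontsum.measurable ((hf2c.comp hcont0).pow 2).measurable)
  -- disjointness
  have hdisj : Disjoint S₁ S₂ := by
    rw [Set.disjoint_left]
    rintro v ⟨⟨_, h1⟩, _⟩ ⟨⟨h2, _⟩, _⟩
    exact absurd (h1.trans h2) (lt_irrefl _)
  -- volumes
  have hvol1 : volume S₁ = ENNReal.ofReal (s ^ n * c / (n+1)) * Vn := by
    rw [show S₁ = {v : EuclideanSpace ℝ (Fin (n+1)) |
        v 0 ∈ Ioo 0 c ∧ ∑ i : Fin n, v (Fin.succAbove (0 : Fin (n+1)) i) ^ 2 < f₁ (v 0) ^ 2}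
      from rfl]
    have hf1c : Continuous f₁ := by rw [hf₁]; exact continuous_mul_right _
    rw [vol_solid n hn 0 c f₁ hf1c (fun t ht => by
      simp only [hf₁]; exact mul_pos ht.1 (div_pos hs hc0))]
    rw [lint_ofReal 0 c hc0.le (fun t => f₁ t ^ n) (hf1c.pow n)
      (fun t ht => by
        simp only [hf₁]
        exact pow_nonneg (mul_pos ht.1 (div_pos hs hc0)).le n)]
    have : (∫ t in (0:ℝ)..c, f₁ t ^ n) = ∫ t in (0:ℝ)..c, (t * (s/c)) ^ n := by
      simp only [hf₁]
    rw [this, integral_one' n c s hc0]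
  have hvol2 : volume S₂ =
      ENNReal.ofReal (Real.sqrt (1+c) ^ n * ((1-c) ^ ((n:ℝ)/2 + 1) / ((n:ℝ)/2 + 1))) * Vn := by
    rw [show S₂ = {v : EuclideanSpace ℝ (Fin (n+1)) |
        v 0 ∈ Ioo c 1 ∧ ∑ i : Fin n, v (Fin.succAbove (0 : Fin (n+1)) i) ^ 2 < f₂ (v 0) ^ 2}
      from rfl]
    rw [vol_solid n hn c 1 f₂ hf2c (fun t ht => by
      simp only [hf₂]; exact Real.sqrt_pos.mpr (by nlinarith [ht.1, ht.2]))]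
    rw [lint_ofReal c 1 hc1.le (fun t => f₂ t ^ n) (hf2c.pow n)
      (fun t ht => by
        simp only [hf₂]
        exact pow_nonneg (Real.sqrt_nonneg _) n)]
    have : (∫ t in c..(1:ℝ), f₂ t ^ n) = ∫ t in c..(1:ℝ), (Real.sqrt ((1+c)*(1-t))) ^ n := by
      simp only [hf₂]
    rw [this, integral_two n c hc0 hc1]
  -- key real computation
  have e1 : Real.sqrt (1+c) ^ n * ((1-c) ^ ((n:ℝ)/2 + 1)) = s ^ n * (1-c) := by
    have h1c : (0:ℝ) < 1 - c := by linarith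
    have hss : s = Real.sqrt (1-c) * Real.sqrt (1+c) := by
      rw [← Real.sqrt_mul h1c.le]
      rw [show (1-c)*(1+c) = s^2 by nlinarith]
      exact (Real.sqrt_sq hs.le).symm
    have h2 : (1-c) ^ ((n:ℝ)/2 + 1) = Real.sqrt (1-c) ^ n * (1-c) := by
      rw [Real.rpow_add h1c, Real.rpow_one]
      congr 1
      rw [Real.sqrt_eq_rpow, ← Real.rpow_natCast ((1-c) ^ ((1:ℝ)/2)) n,
        ← Real.rpow_mul h1c.le]
      congr 1
      ring
    rw [h2, hss, mul_pow]
    ring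
  -- total
  calc ENNReal.ofReal (Real.sqrt π ^ n / Real.Gamma (n / 2 + 1) * (s ^ n / (n+1)))
      = ENNReal.ofReal (s ^ n / (n+1)) * Vn := by
        rw [hVn, ← ENNReal.ofReal_mul (by positivity)]
        congr 1
        ring
    _ ≤ (ENNReal.ofReal (s ^ n * c / (n+1)) +
          ENNReal.ofReal (Real.sqrt (1+c) ^ n * ((1-c) ^ ((n:ℝ)/2 + 1) / ((n:ℝ)/2 + 1)))) * Vn := by
        apply mul_le_mul_left
        rw [← ENNReal.ofReal_add (by positivity) (mul_nonneg
          (pow_nonneg (Real.sqrt_nonneg _) n)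
          (div_nonneg (Real.rpow_nonneg (by linarith) _) (by positivity)))]
        apply ENNReal.ofReal_le_ofReal
        have h3 : Real.sqrt (1+c) ^ n * ((1-c) ^ ((n:ℝ)/2 + 1) / ((n:ℝ)/2 + 1))
            = s ^ n * (1-c) / ((n:ℝ)/2 + 1) := by
          rw [← e1]; ring
        rw [h3]
        have h4 : s ^ n * (1-c) / ((n:ℝ)/2 + 1) ≥ s ^ n * (1-c) / ((n:ℝ) + 1) := by
          apply div_le_div_of_nonneg_left (by nlinarith [pow_pos hs n]) (by positivity)
          linarith
        rw [ge_iff_le] at h4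
        calc s ^ n / (n+1) = s ^ n * c / (n+1) + s ^ n * (1-c) / ((n:ℝ)+1) := by ring
          _ ≤ _ := by linarith
    _ = volume S₁ + volume S₂ := by rw [hvol1, hvol2, add_mul]
    _ = volume (S₁ ∪ S₂) := (measure_union hdisj hmeas2).symm
    _ ≤ volume {v : EuclideanSpace ℝ (Fin (n+1)) | ‖v‖ < 1 ∧ c * ‖v‖ < v 0} := by
        apply measure_mono
        exact Set.union_subset hsub1 hsub2

set_option maxHeartbeats 1000000 in
/-- If `x` is uniform on the unit sphere in `ℝ^d` and `y` is a fixed unit vector, then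
`P(x·y > cos ε) ≥ sin(ε)^(d-1) / ((d-1) B(1/2, (d-1)/2))`. -/
theorem sphere_cap_lower_bound (d : ℕ) (hd : 2 ≤ d)
    {Ω : Type*} [MeasurableSpace Ω] (μ : Measure Ω) [IsProbabilityMeasure μ]
    (X : Ω → EuclideanSpace ℝ (Fin d)) (hX : Measurable X)
    (hsphere : ∀ ω, ‖X ω‖ = 1)
    (hrot : ∀ O : EuclideanSpace ℝ (Fin d) ≃ₗᵢ[ℝ] EuclideanSpace ℝ (Fin d),
      Measure.map (fun ω => O (X ω)) μ = Measure.map X μ)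
    (y : EuclideanSpace ℝ (Fin d)) (hy : ‖y‖ = 1)
    (ε : ℝ) (hε : ε ∈ Set.Ioo 0 (Real.pi / 2)) :
    ENNReal.ofReal (Real.sin ε ^ (d - 1) /
        (((d : ℝ) - 1) * betaFn (1/2) (((d : ℝ) - 1) / 2))) ≤
      μ {ω | Real.cos ε < (inner ℝ (X ω) y : ℝ)} := by
  obtain ⟨n, rfl⟩ : ∃ n, d = n + 1 := ⟨d - 1, (Nat.succ_pred_eq_of_pos (by omega)).symm⟩
  have hn : 0 < n := by omega
  obtain ⟨hε0, hεπ⟩ := hε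
  set c := Real.cos ε with hcdef
  set s := Real.sin ε with hsdef
  have hπ := Real.pi_pos
  have hc0 : 0 < c := Real.cos_pos_of_mem_Ioo ⟨by linarith, hεπ⟩
  have hs : 0 < s := Real.sin_pos_of_pos_of_lt_pi hε0 (by linarith)
  have hcs : c ^ 2 + s ^ 2 = 1 := by
    rw [hcdef, hsdef, add_comm]; exact Real.sin_sq_add_cos_sq ε
  have hc1 : c < 1 := by nlinarith [Real.cos_le_one ε, mul_pos hs hs]
  -- step 1: rotation invariance of the cap probability
  have probEq : ∀ u w : EuclideanSpace ℝ (Fin (n+1)), ‖u‖ = 1 → ‖w‖ = 1 →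
      μ {ω | c < (inner ℝ (X ω) u : ℝ)} = μ {ω | c < (inner ℝ (X ω) w : ℝ)} := by
    intro u w hu hw
    set O : EuclideanSpace ℝ (Fin (n+1)) ≃ₗᵢ[ℝ] EuclideanSpace ℝ (Fin (n+1)) :=
      Submodule.reflection (ℝ ∙ (u - w))ᗮ with hO
    have hOu : O u = w := Submodule.reflection_sub (by rw [hu, hw])
    have hA : MeasurableSet {x : EuclideanSpace ℝ (Fin (n+1)) | c < (inner ℝ x w : ℝ)} :=
      measurableSet_lt measurable_const (measurable_id.inner_const)
    have h2 : Measure.map (fun ω => O (X ω)) μ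
          {x : EuclideanSpace ℝ (Fin (n+1)) | c < (inner ℝ x w : ℝ)}
        = Measure.map X μ {x : EuclideanSpace ℝ (Fin (n+1)) | c < (inner ℝ x w : ℝ)} := by
      rw [hrot O]
    rw [Measure.map_apply (show Measurable fun ω => O (X ω) from O.continuous.measurable.comp hX) hA,
      Measure.map_apply hX hA] at h2
    have hpre : (fun ω => O (X ω)) ⁻¹' {x : EuclideanSpace ℝ (Fin (n+1)) | c < (inner ℝ x w : ℝ)}
        = {ω | c < (inner ℝ (X ω) u : ℝ)} := by
      ext ω
      simp only [Set.mem_preimage, Set.mem_setOf_eq]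
      rw [← hOu, O.inner_map_map]
    rw [hpre] at h2
    exact h2
  -- the cap in space
  set Cap : EuclideanSpace ℝ (Fin (n+1)) → Set (EuclideanSpace ℝ (Fin (n+1))) :=
    fun u => {v | ‖v‖ < 1 ∧ c * ‖v‖ < (inner ℝ u v : ℝ)} with hCap
  have capMeasSet : ∀ u, MeasurableSet (Cap u) := by
    intro u
    apply MeasurableSet.inter
    · exact measurableSet_lt measurable_norm measurable_const
    · exact measurableSet_lt (measurable_const.mul measurable_norm)
        (measurable_id.const_inner)
  have capEq : ∀ u w : EuclideanSpace ℝ (Fin (n+1)), ‖u‖ = 1 → ‖w‖ = 1 →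
      volume (Cap u) = volume (Cap w) := by
    intro u w hu hw
    set O : EuclideanSpace ℝ (Fin (n+1)) ≃ₗᵢ[ℝ] EuclideanSpace ℝ (Fin (n+1)) :=
      Submodule.reflection (ℝ ∙ (u - w))ᗮ with hO
    have hOu : O u = w := Submodule.reflection_sub (by rw [hu, hw])
    have h1 := (O.measurePreserving).measure_preimage (capMeasSet w).nullMeasurableSet
    have hpre : (O : EuclideanSpace ℝ (Fin (n+1)) → EuclideanSpace ℝ (Fin (n+1))) ⁻¹' (Cap w)
        = Cap u := by
      ext v
      simp only [hCap, Set.mem_preimage, Set.mem_setOf_eq, O.norm_map]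
      rw [← hOu, O.inner_map_map]
    rw [hpre] at h1
    exact h1
  -- Fubini
  set e₀ : EuclideanSpace ℝ (Fin (n+1)) := EuclideanSpace.single 0 1 with he₀
  have he₀n : ‖e₀‖ = 1 := by simp [he₀]
  set P := μ {ω | c < (inner ℝ (X ω) y : ℝ)} with hP
  set ballE := Metric.ball (0 : EuclideanSpace ℝ (Fin (n+1))) 1 with hballE
  set ν := volume.restrict ballE with hν
  have key : P * volume ballE = volume (Cap e₀) := by
    set S : Set (Ω × EuclideanSpace ℝ (Fin (n+1))) :=
      {p | c * ‖p.2‖ < (inner ℝ (X p.1) p.2 : ℝ)} with hS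
    have hSmeas : MeasurableSet S :=
      measurableSet_lt (measurable_const.mul measurable_snd.norm)
        ((hX.comp measurable_fst).inner measurable_snd)
    have right : (μ.prod ν) S = volume (Cap e₀) := by
      rw [Measure.prod_apply hSmeas]
      have slice1 : ∀ ω, ν (Prod.mk ω ⁻¹' S) = volume (Cap e₀) := by
        intro ω
        have hAm : MeasurableSet {v : EuclideanSpace ℝ (Fin (n+1)) |
            c * ‖v‖ < (inner ℝ (X ω) v : ℝ)} :=
          measurableSet_lt (measurable_const.mul measurable_norm) (measurable_id.const_inner)
        have : Prod.mk ω ⁻¹' S = {v : EuclideanSpace ℝ (Fin (n+1)) |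
            c * ‖v‖ < (inner ℝ (X ω) v : ℝ)} := rfl
        rw [this, hν, Measure.restrict_apply hAm]
        have hseteq : {v : EuclideanSpace ℝ (Fin (n+1)) |
            c * ‖v‖ < (inner ℝ (X ω) v : ℝ)} ∩ ballE = Cap (X ω) := by
          ext v
          simp only [hCap, Set.mem_inter_iff, Set.mem_setOf_eq, hballE,
            Metric.mem_ball, dist_zero_right]
          tauto
        rw [hseteq]
        exact capEq _ _ (hsphere ω) he₀n
      simp only [slice1]
      rw [lintegral_const]
      simp
    have left : (μ.prod ν) S = P * volume ballE := by
      rw [Measure.prod_apply_symm hSmeas]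
      have slice2 : ∀ v : EuclideanSpace ℝ (Fin (n+1)), v ≠ 0 →
          μ ((fun ω => (ω, v)) ⁻¹' S) = P := by
        intro v hv
        have hvn : 0 < ‖v‖ := norm_pos_iff.mpr hv
        have hu : ‖(‖v‖⁻¹ • v : EuclideanSpace ℝ (Fin (n+1)))‖ = 1 := norm_smul_inv_norm hv
        have hseteq : (fun ω => (ω, v)) ⁻¹' S
            = {ω | c < (inner ℝ (X ω) ((‖v‖⁻¹ • v : EuclideanSpace ℝ (Fin (n+1)))) : ℝ)} := by
          ext ω
          simp only [Set.mem_preimage, hS, Set.mem_setOf_eq, real_inner_smul_right]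
          rw [show (‖v‖⁻¹ * (inner ℝ (X ω) v : ℝ)) = (inner ℝ (X ω) v : ℝ) / ‖v‖ by
            rw [div_eq_mul_inv]; ring]
          rw [lt_div_iff₀ hvn]
        rw [hseteq]
        exact probEq _ _ hu hy
      have hae : (fun v => μ ((fun ω => (ω, v)) ⁻¹' S)) =ᵐ[ν] (fun _ => P) := by
        have hsub : {v : EuclideanSpace ℝ (Fin (n+1)) |
            ¬ μ ((fun ω => (ω, v)) ⁻¹' S) = P} ⊆ {0} := by
          intro v hv
          by_contra h0
          exact hv (slice2 v (by simpa using h0))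
        have hν0 : ν ({0} : Set (EuclideanSpace ℝ (Fin (n+1)))) = 0 := by
          rw [hν, Measure.restrict_apply (measurableSet_singleton 0)]
          exact measure_mono_null Set.inter_subset_left (measure_singleton 0)
        rw [Filter.EventuallyEq, ae_iff]
        exact measure_mono_null hsub hν0
      rw [lintegral_congr_ae hae, lintegral_const]
      rw [hν, Measure.restrict_apply_univ]
    rw [← left, right]
  -- identify the cap with the coordinate description
  have hinner : ∀ v : EuclideanSpace ℝ (Fin (n+1)), (inner ℝ e₀ v : ℝ) = v 0 := by
    intro v
    simp [he₀, EuclideanSpace.inner_single_left]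
  have hCapE : Cap e₀ = {v : EuclideanSpace ℝ (Fin (n+1)) | ‖v‖ < 1 ∧ c * ‖v‖ < v 0} := by
    ext v
    simp only [hCap, Set.mem_setOf_eq, hinner]
  -- volume of the unit ball
  have hvb : volume ballE = ENNReal.ofReal (Real.sqrt π ^ (n+1) / Real.Gamma ((n+1 : ℕ) / 2 + 1)) := by
    rw [hballE, EuclideanSpace.volume_ball]
    simp [Fintype.card_fin]
  -- positivity facts
  set m : ℝ := (n : ℝ) with hm
  have hm1 : (1:ℝ) ≤ m := by rw [hm]; exact_mod_cast hn
  have hG1 : 0 < Real.Gamma (m/2) := Real.Gamma_pos_of_pos (by linarith)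
  have hG2 : 0 < Real.Gamma ((m+1)/2) := Real.Gamma_pos_of_pos (by linarith)
  have hsπ : 0 < Real.sqrt π := Real.sqrt_pos.mpr hπ
  have hbeta : 0 < betaFn (1/2) (m/2) := by
    rw [betaFn]
    have h0 : ((1:ℝ)/2 + m/2) = (m+1)/2 := by ring
    rw [h0]
    exact div_pos (mul_pos (Real.Gamma_pos_of_pos (by norm_num)) hG1) hG2
  -- the key real identity
  have hreal : s ^ n / (m * betaFn (1/2) (m/2)) * (Real.sqrt π ^ (n+1) / Real.Gamma ((n+1 : ℕ) / 2 + 1))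
      = Real.sqrt π ^ n / Real.Gamma ((n : ℝ) / 2 + 1) * (s ^ n / ((n : ℝ) + 1)) := by
    have e1 : Real.Gamma (m/2 + 1) = m/2 * Real.Gamma (m/2) :=
      Real.Gamma_add_one (by positivity)
    have e2 : Real.Gamma ((m+1)/2 + 1) = (m+1)/2 * Real.Gamma ((m+1)/2) :=
      Real.Gamma_add_one (by positivity)
    have hcast : ((n+1 : ℕ) : ℝ) / 2 + 1 = (m+1)/2 + 1 := by push_cast [hm]; ring
    have hBval : betaFn (1/2) (m/2) = Real.sqrt π * Real.Gamma (m/2) / Real.Gamma ((m+1)/2) := by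
      rw [betaFn, Real.Gamma_one_half_eq]
      congr 1
      ring_nf
    rw [hcast, e2, hBval, pow_succ, ← hm, e1]
    field_simp
  -- conclude
  have h0 : volume ballE ≠ 0 := by
    rw [hballE]
    exact (Metric.measure_ball_pos volume 0 one_pos).ne'
  have htop : volume ballE ≠ ⊤ := by
    rw [hballE]
    exact measure_ball_lt_top.ne
  have hexp : (n + 1 - 1 : ℕ) = n := rfl
  have hcast2 : ((n+1 : ℕ) : ℝ) - 1 = m := by push_cast [hm]; ring
  rw [hexp, hcast2]
  rw [← ENNReal.mul_le_mul_iff_left h0 htop]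
  have hTnn : 0 ≤ s ^ n / (m * betaFn (1/2) (m/2)) := by positivity
  calc ENNReal.ofReal (s ^ n / (m * betaFn (1/2) (m/2))) * volume ballE
      = ENNReal.ofReal (Real.sqrt π ^ n / Real.Gamma ((n : ℝ) / 2 + 1) * (s ^ n / ((n : ℝ) + 1))) := by
        rw [hvb, ← ENNReal.ofReal_mul hTnn, hreal]
    _ ≤ volume (Cap e₀) := by
        rw [hCapE]
        exact cap_vol_lower n hn c s hc0 hc1 hs hcs
    _ = P * volume ballE := key.symm
end
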